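/- arXiv:1907.11802 — 3 statements merged into one kernel-verified Lean document; each statement's English description precedes it below -/
import Mathlib

section
/- Let (W,S) be a finite Coxeter system and let w ∈ W with ℓ(w) = n ≥ 1. Then for every integer k with 0 < k < n, the number of v ∈ W with v ≤ w and ℓ(v) = k is at least 2. Consequently, the Poincaré polynomial P_w(q) = Σ_{v ≤ w} q^{ℓ(v)} satisfies 1 + 2(q + q² + ⋯ + q^{n−1}) + q^n ≤ P_w(q) coefficientwise, and the lower interval [e,w] has cardinality at least 2n. -/
open Polynomial

/-- A Bruhat edge `u → v`: `v = u * t` for some reflection `t`, and `ℓ(u) < ℓ(v)`. -/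
def BruhatEdge {B W : Type*} [Group W] {M : CoxeterMatrix B}
    (cs : CoxeterSystem M W) (u v : W) : Prop :=
  ∃ t : W, cs.IsReflection t ∧ v = u * t ∧ cs.length u < cs.length v

/-- Bruhat order: the reflexive-transitive closure of the Bruhat edge relation. -/
def BruhatLE {B W : Type*} [Group W] {M : CoxeterMatrix B}
    (cs : CoxeterSystem M W) : W → W → Prop :=
  Relation.ReflTransGen (BruhatEdge cs)

/-- The defining properties of the family of `R`-polynomials. -/
def IsRFamily {B W : Type*} [Group W] {M : CoxeterMatrix B}
    (cs : CoxeterSystem M W) (R : W → W → Polynomial ℤ) : Prop :=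
  (∀ u w, ¬ BruhatLE cs u w → R u w = 0) ∧
  (∀ w, R w w = 1) ∧
  (∀ u w, ∀ i : B, cs.length (w * cs.simple i) < cs.length w →
    (cs.length (u * cs.simple i) < cs.length u →
      R u w = R (u * cs.simple i) (w * cs.simple i)) ∧
    (cs.length u < cs.length (u * cs.simple i) →
      R u w = (X - 1) * R u (w * cs.simple i)
        + X * R (u * cs.simple i) (w * cs.simple i)))

/-- The defining properties of the family of `R̃`-polynomials. -/
def IsRTildeFamily {B W : Type*} [Group W] {M : CoxeterMatrix B}
    (cs : CoxeterSystem M W) (Rt : W → W → Polynomial ℕ) : Prop :=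
  (∀ u w, ¬ BruhatLE cs u w → Rt u w = 0) ∧
  (∀ w, Rt w w = 1) ∧
  (∀ u w, ∀ i : B, cs.length (w * cs.simple i) < cs.length w →
    (cs.length (u * cs.simple i) < cs.length u →
      Rt u w = Rt (u * cs.simple i) (w * cs.simple i)) ∧
    (cs.length u < cs.length (u * cs.simple i) →
      Rt u w = X * Rt u (w * cs.simple i)
        + Rt (u * cs.simple i) (w * cs.simple i)))

/-- Dihedral polynomials. -/
noncomputable def dPoly : ℕ → Polynomial ℤ
  | 0 => 1
  | 1 => X
  | 2 => X ^ 2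
  | (n + 3) => X * dPoly (n + 2) + (X + 1) * dPoly (n + 1)

/-- The degree of a vertex `x` in the Bruhat graph on the vertex set `V`:
the total number of incident edges (incoming plus outgoing). -/
noncomputable def degIn {B W : Type*} [Group W] {M : CoxeterMatrix B}
    (cs : CoxeterSystem M W) (V : Set W) (x : W) : ℕ :=
  Nat.card {y : W // y ∈ V ∧ (BruhatEdge cs x y ∨ BruhatEdge cs y x)}

/-- The Bruhat graph on the vertex set `V` is regular: all vertices have the same degree. -/
def IsRegularOn {B W : Type*} [Group W] {M : CoxeterMatrix B}
    (cs : CoxeterSystem M W) (V : Set W) : Prop :=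
  ∀ x ∈ V, ∀ y ∈ V, degIn cs V x = degIn cs V y

/-!
Take a reduced word `s₁ ⋯ sₙ` for `w` and `0 < k < n`. The prefix `z = s₁ ⋯ s_{k+1}` lies below `w`,
and so do its two Bruhat predecessors `s₁ ⋯ s_k = z s_{k+1}` and `s₂ ⋯ s_{k+1} = s₁ z`, both of
length `k`. They differ, since `s₁` shortens the first but lengthens the second. Counting
`e` and `w` at the ends gives the coefficientwise bound, and evaluating at `q = 1` the bound on
the cardinality.
-/

theorem coeff_finsum_mem_X_pow {α R : Type*} [Finite α] [Semiring R] (p : α → Prop)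
    (f : α → ℕ) (m : ℕ) :
    (∑ᶠ a ∈ {a | p a}, (X : R[X]) ^ f a).coeff m = Nat.card {a // p a ∧ f a = m} := by
  classical
  cases nonempty_fintype α
  rw [finsum_mem_eq_toFinset_sum, finsetSum_coeff]
  simp [coeff_X_pow, Finset.sum_boole, Nat.card_eq_fintype_card, Fintype.card_subtype,
    Finset.filter_filter, eq_comm]

theorem eval_one_finsum_mem_X_pow {α R : Type*} [Finite α] [Semiring R] (p : α → Prop)
    (f : α → ℕ) :
    (∑ᶠ a ∈ {a | p a}, (X : R[X]) ^ f a).eval 1 = Nat.card {a // p a} := by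
  classical
  cases nonempty_fintype α
  rw [finsum_mem_eq_toFinset_sum, eval_finsetSum]
  simp [eval_X_pow, Nat.card_eq_fintype_card, Fintype.card_subtype]

theorem eval_one_le_eval_one_of_coeff_le {R : Type*} [Semiring R] [PartialOrder R]
    [IsOrderedAddMonoid R] {p q : R[X]} (h : ∀ m, p.coeff m ≤ q.coeff m) :
    p.eval 1 ≤ q.eval 1 := by
  have hp : p.natDegree < max p.natDegree q.natDegree + 1 := by omega
  have hq : q.natDegree < max p.natDegree q.natDegree + 1 := by omega
  rw [eval_eq_sum_range' hp, eval_eq_sum_range' hq]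
  simpa using Finset.sum_le_sum fun m _ => h m

theorem coeff_one_add_two_mul_sum_add_X_pow_le {n : ℕ} (hn : 1 ≤ n) {c : ℕ → ℕ}
    (h0 : 1 ≤ c 0) (hmid : ∀ k, 0 < k → k < n → 2 ≤ c k) (htop : 1 ≤ c n) (m : ℕ) :
    ((1 : ℤ[X]) + 2 * (∑ j ∈ Finset.Ico 1 n, X ^ j) + X ^ n).coeff m ≤ (c m : ℤ) := by
  simp only [coeff_add, coeff_one, coeff_X_pow, finsetSum_coeff, ← C_ofNat, coeff_C_mul,
    Finset.sum_ite_eq, Finset.mem_Ico]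
  rcases Nat.eq_zero_or_pos m with rfl | hm
  · simp; omega
  rcases lt_trichotomy m n with hmn | rfl | hmn
  · have := hmid m hm hmn
    simp [hm.ne', hmn.ne]; omega
  · simp [hm.ne']; omega
  · simp [hm.ne', hmn.ne', hmn.le.not_gt]

theorem eval_one_one_add_two_mul_sum_add_X_pow {n : ℕ} (hn : 1 ≤ n) :
    ((1 : ℤ[X]) + 2 * (∑ j ∈ Finset.Ico 1 n, X ^ j) + X ^ n).eval 1 = 2 * (n : ℤ) := by
  simp [eval_finsetSum]
  omega

section

variable {B W : Type*} [Group W] {M : CoxeterMatrix B} (cs : CoxeterSystem M W)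

local prefix:100 "ℓ" => cs.length
local prefix:100 "σ" => cs.simple
local prefix:100 "π" => cs.wordProd

theorem bruhatEdge_reflection_mul {u t : W} (ht : cs.IsReflection t) (h : ℓ u < ℓ (t * u)) :
    BruhatEdge cs u (t * u) :=
  ⟨u⁻¹ * t * u, by simpa using ht.conj u⁻¹, by group, h⟩

theorem bruhatEdge_wordProd_take_succ {ω : List B} (hω : cs.IsReduced ω) {j : ℕ}
    (hj : j < ω.length) : BruhatEdge cs (π (ω.take j)) (π (ω.take (j + 1))) := by
  have hprod : π (ω.take (j + 1)) = π (ω.take j) * σ ω[j] := by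
    rw [List.take_add_one, List.getElem?_eq_getElem hj, Option.toList_some, cs.wordProd_append,
      cs.wordProd_singleton]
  refine ⟨σ ω[j], cs.isReflection_simple _, hprod, ?_⟩
  rw [(hω.take j).eq, (hω.take (j + 1)).eq]
  simp only [List.length_take]
  omega

theorem bruhatLE_wordProd_take_of_le {ω : List B} (hω : cs.IsReduced ω) {i j : ℕ}
    (hij : i ≤ j) : BruhatLE cs (π (ω.take i)) (π (ω.take j)) := by
  induction j, hij using Nat.le_induction with
  | base => exact .refl
  | succ j _ ih =>
    refine ih.trans ?_
    rcases lt_or_ge j ω.length with hj | hj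
    · exact .single (bruhatEdge_wordProd_take_succ cs hω hj)
    · rw [List.take_of_length_le hj, List.take_of_length_le (by omega)]

theorem bruhatLE_wordProd_take {ω : List B} (hω : cs.IsReduced ω) (j : ℕ) :
    BruhatLE cs (π (ω.take j)) (π ω) := by
  rcases le_total j ω.length with h | h
  · simpa using bruhatLE_wordProd_take_of_le cs hω h
  · rw [List.take_of_length_le h]
    exact .refl

theorem one_bruhatLE (w : W) : BruhatLE cs 1 w := by
  obtain ⟨ω, hω, rfl⟩ := cs.exists_isReduced w
  simpa using bruhatLE_wordProd_take cs hω 0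

theorem exists_ne_bruhatEdge_of_length_eq {z : W} {k : ℕ} (hz : ℓ z = k + 2) :
    ∃ u₁ u₂, u₁ ≠ u₂ ∧ BruhatEdge cs u₁ z ∧ BruhatEdge cs u₂ z ∧
      ℓ u₁ = k + 1 ∧ ℓ u₂ = k + 1 := by
  obtain ⟨ω, hω, rfl⟩ := cs.exists_isReduced z
  have hlen : ω.length = k + 2 := hω.eq ▸ hz
  obtain ⟨i, ρ, rfl⟩ := List.exists_cons_of_length_eq_add_one hlen
  simp only [List.length_cons, Nat.add_right_cancel_iff] at hlen
  have hρ : cs.IsReduced ρ := by simpa using hω.drop 1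
  refine ⟨π ((i :: ρ).take (k + 1)), π ρ, ?_, ?_, ?_, ?_, ?_⟩
  · intro h
    have hcancel : π (i :: ρ) = π (ρ.take k) := by
      rw [cs.wordProd_cons, ← h, List.take_succ_cons, cs.wordProd_cons,
        cs.simple_mul_simple_cancel_left]
    have := cs.length_wordProd_le (ρ.take k)
    rw [← hcancel, hω.eq] at this
    simp at this
  · have := bruhatEdge_wordProd_take_succ cs hω (j := k + 1) (by simp [hlen])
    rwa [List.take_of_length_le (l := i :: ρ) (i := k + 1 + 1) (by simp [hlen])] at this
  · rw [cs.wordProd_cons]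
    refine bruhatEdge_reflection_mul cs (cs.isReflection_simple i) ?_
    rw [← cs.wordProd_cons, hω.eq, hρ.eq]
    simp
  · rw [(hω.take _).eq]
    simp [hlen]
  · rw [hρ.eq, hlen]

theorem exists_ne_bruhatLE_of_length_eq {w : W} {k : ℕ} (hk : 0 < k) (hkw : k < ℓ w) :
    ∃ u₁ u₂, u₁ ≠ u₂ ∧ BruhatLE cs u₁ w ∧ BruhatLE cs u₂ w ∧ ℓ u₁ = k ∧ ℓ u₂ = k := by
  obtain ⟨k, rfl⟩ := Nat.exists_eq_add_of_lt hk
  obtain ⟨ω, hω, rfl⟩ := cs.exists_isReduced w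
  have hz : ℓ (π (ω.take (k + 2))) = k + 2 := by
    rw [(hω.take _).eq, List.length_take, ← hω.eq]
    omega
  obtain ⟨u₁, u₂, hne, h₁, h₂, hl₁, hl₂⟩ := exists_ne_bruhatEdge_of_length_eq cs hz
  have hzw := bruhatLE_wordProd_take cs hω (k + 2)
  exact ⟨u₁, u₂, hne, .head h₁ hzw, .head h₂ hzw, by omega, by omega⟩

theorem two_le_card_bruhatLE_length_eq [Finite W] {w : W} {k : ℕ} (hk : 0 < k)
    (hkw : k < ℓ w) : 2 ≤ Nat.card {v : W // BruhatLE cs v w ∧ ℓ v = k} := by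
  obtain ⟨u₁, u₂, hne, h₁, h₂, hl₁, hl₂⟩ := exists_ne_bruhatLE_of_length_eq cs hk hkw
  have : Nontrivial {v : W // BruhatLE cs v w ∧ ℓ v = k} :=
    ⟨⟨⟨u₁, h₁, hl₁⟩, ⟨u₂, h₂, hl₂⟩, fun h => hne (congrArg Subtype.val h)⟩⟩
  exact Finite.one_lt_card

end

theorem stmt0 {B W : Type*} [Group W] [Finite W] {M : CoxeterMatrix B}
    (cs : CoxeterSystem M W) (w : W) (n : ℕ) (hn : cs.length w = n) (hn1 : 1 ≤ n) :
    (∀ k : ℕ, 0 < k → k < n →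
      2 ≤ Nat.card {v : W // BruhatLE cs v w ∧ cs.length v = k}) ∧
    (∀ m : ℕ,
      ((1 : Polynomial ℤ) + 2 * (∑ j ∈ Finset.Ico 1 n, X ^ j) + X ^ n).coeff m
        ≤ (∑ᶠ v ∈ {v : W | BruhatLE cs v w}, (X : Polynomial ℤ) ^ cs.length v).coeff m) ∧
    2 * n ≤ Nat.card {v : W // BruhatLE cs v w} := by
  have hmid : ∀ k, 0 < k → k < n →
      2 ≤ Nat.card {v : W // BruhatLE cs v w ∧ cs.length v = k} :=
    fun k hk hkn => two_le_card_bruhatLE_length_eq cs hk (hn ▸ hkn)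
  have hcoeff : ∀ m : ℕ,
      ((1 : Polynomial ℤ) + 2 * (∑ j ∈ Finset.Ico 1 n, X ^ j) + X ^ n).coeff m
        ≤ (∑ᶠ v ∈ {v : W | BruhatLE cs v w}, (X : Polynomial ℤ) ^ cs.length v).coeff m := by
    intro m
    rw [coeff_finsum_mem_X_pow]
    refine coeff_one_add_two_mul_sum_add_X_pow_le hn1 ?_ hmid ?_ m
    · have : Nonempty {v : W // BruhatLE cs v w ∧ cs.length v = 0} :=
        ⟨⟨1, one_bruhatLE cs w, cs.length_one⟩⟩
      exact Nat.card_pos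
    · have : Nonempty {v : W // BruhatLE cs v w ∧ cs.length v = n} := ⟨⟨w, .refl, hn⟩⟩
      exact Nat.card_pos
  refine ⟨hmid, hcoeff, ?_⟩
  have hcard := eval_one_le_eval_one_of_coeff_le hcoeff
  rw [eval_one_one_add_two_mul_sum_add_X_pow hn1, eval_one_finsum_mem_X_pow] at hcard
  exact_mod_cast hcard
end

section
/- Let (W,S) be a finite Coxeter system and R its family of R-polynomials. If u ≤ v in Bruhat order, then the Bruhat sizes satisfy |u| ≤ |v|, i.e. R_{e,u}(2) ≤ R_{e,v}(2). -/
open Polynomial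

/-!
Induct on `v` along a right descent `s`. At `q = 2` the defining recursion
`R_{a,v} = R_{as,vs}` (if `as < a`), `R_{a,v} = (q - 1) R_{a,vs} + q R_{as,vs}` (if `as > a`)
has nonnegative coefficients, and the lifting property of Bruhat order turns `u ≤ v` into
`u ≤ vs` or `us ≤ vs`. The one remaining case needs `R_{a,v}(2) ≤ R_{as,v}(2)` whenever
`as < a`, which follows by induction along a left descent of `v` from the left-handed
recursion. That in turn holds because, at `q = 2`, the right recursion operators commute with
their left mirror images and agree with them on `R_{·,e}`.

The lifting property and the commutation rest on the strong exchange condition, which comes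
from the sign representation of `W` on `W × {±1}`.
-/

namespace CoxeterSystem

variable {B W : Type*} [Group W] {M : CoxeterMatrix B} (cs : CoxeterSystem M W)

local prefix:100 "s" => cs.simple
local prefix:100 "π" => cs.wordProd
local prefix:100 "ℓ" => cs.length
local prefix:100 "ris" => cs.rightInvSeq

theorem simple_mul_pow_mul_simple (i j : B) (p : ℕ) :
    s j * (s i * s j) ^ p = (s i * s j)⁻¹ ^ p * s j := by
  have h : s j * (s i * s j) * (s j)⁻¹ = (s i * s j)⁻¹ := by simp [mul_assoc]
  rw [← h, conj_pow, inv_simple, mul_assoc, simple_mul_simple_self, mul_one]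

theorem alternatingWord_two_mul_succ (i j : B) (p : ℕ) :
    alternatingWord i j (2 * (p + 1)) = i :: j :: alternatingWord i j (2 * p) := by
  rw [show 2 * (p + 1) = 2 * p + 1 + 1 by ring, alternatingWord_succ', alternatingWord_succ']
  simp

theorem rightInvSeq_alternatingWord (i j : B) (p : ℕ) :
    ris (alternatingWord i j (2 * p)) =
      ((List.range (2 * p)).map fun a => (s i * s j)⁻¹ ^ a * s j).reverse := by
  induction p with
  | zero => simp [alternatingWord]
  | succ p ih =>
    have hsx := cs.simple_mul_pow_mul_simple i j p
    set x := s i * s j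
    have hπ : π (alternatingWord i j (2 * p)) = x ^ p := by
      simp [prod_alternatingWord_eq_mul_pow, x]
    have hx : s j * s i = x⁻¹ := by simp [x]
    rw [alternatingWord_two_mul_succ, show 2 * (p + 1) = 2 * p + 1 + 1 by ring,
      List.range_succ, List.range_succ]
    simp only [rightInvSeq, wordProd_cons, hπ, ih, List.map_append, List.map_cons,
      List.map_nil, List.append_assoc, List.cons_append, List.nil_append, List.reverse_append,
      List.reverse_cons, List.reverse_nil]
    refine List.cons_eq_cons.mpr ⟨?_, List.cons_eq_cons.mpr ⟨?_, rfl⟩⟩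
    · rw [mul_inv_rev, inv_simple, hsx]
      simp only [mul_assoc]
      rw [← mul_assoc (s j) (s i), hx]
      group
    · rw [mul_assoc, hsx]
      group

section SignRepresentation

variable [DecidableEq W]

def signFlip (i : B) : Equiv.Perm (W × ℤˣ) :=
  Function.Involutive.toPerm
    (fun p => (s i * p.1 * s i, if p.1 = s i then -p.2 else p.2))
    (by
      rintro ⟨t, ε⟩
      have hconj : s i * (s i * t * s i) * s i = t := by simp [mul_assoc]
      by_cases h : t = s i
      · simp [h]
      · have h' : s i * t * s i ≠ s i := fun h' => h (by simpa [h'] using hconj.symm)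
        simp [h, h', hconj])

theorem signFlip_apply (i : B) (t : W) (ε : ℤˣ) :
    cs.signFlip i (t, ε) = (s i * t * s i, if t = s i then -ε else ε) := rfl

theorem prod_map_signFlip_apply (ω : List B) (t : W) (ε : ℤˣ) :
    (ω.map cs.signFlip).prod (t, ε) =
      (π ω * t * (π ω)⁻¹, (-1) ^ (ris ω).count t * ε) := by
  induction ω with
  | nil => simp
  | cons i ω ih =>
    have hcond : π ω * t * (π ω)⁻¹ = s i ↔ (π ω)⁻¹ * s i * π ω = t := by
      constructor <;> intro h <;> rw [← h] <;> group
    simp only [List.map_cons, List.prod_cons, Equiv.Perm.mul_apply, ih, signFlip_apply,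
      wordProd_cons, rightInvSeq, List.count_cons, beq_iff_eq, hcond, mul_inv_rev, inv_simple]
    refine Prod.ext (by simp only; group) ?_
    split_ifs <;> simp [pow_succ]

theorem signFlip_mul_pow (i j : B) (p : ℕ) :
    (cs.signFlip i * cs.signFlip j) ^ p =
      ((alternatingWord i j (2 * p)).map cs.signFlip).prod := by
  induction p with
  | zero => simp [alternatingWord]
  | succ p ih => simp [pow_succ', ih, alternatingWord_two_mul_succ, mul_assoc]

theorem even_count_rightInvSeq_braid (i j : B) (t : W) :
    Even ((ris (alternatingWord i j (2 * M i j))).count t) := by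
  have hperiod : (fun a => (s i * s j)⁻¹ ^ a * s j) ∘ (M i j + ·) =
      fun a => (s i * s j)⁻¹ ^ a * s j := by
    funext a
    simp [pow_add]
  rw [rightInvSeq_alternatingWord, List.count_reverse, two_mul, List.range_add,
    List.map_append, List.map_map, hperiod, List.count_append]
  exact Even.add_self _

theorem signFlip_braid (i j : B) : (cs.signFlip i * cs.signFlip j) ^ M i j = 1 := by
  ext1 ⟨t, ε⟩
  rw [signFlip_mul_pow, prod_map_signFlip_apply,
    (cs.even_count_rightInvSeq_braid i j t).neg_one_pow, prod_alternatingWord_eq_mul_pow]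
  simp

def signRep : W →* Equiv.Perm (W × ℤˣ) := cs.lift ⟨cs.signFlip, cs.signFlip_braid⟩

def inversionSign (w t : W) : ℤˣ := (cs.signRep w (t, 1)).2

theorem signRep_simple (i : B) : cs.signRep (s i) = cs.signFlip i :=
  cs.lift_apply_simple _ i

theorem signRep_wordProd (ω : List B) : cs.signRep (π ω) = (ω.map cs.signFlip).prod := by
  simp [wordProd, map_list_prod, Function.comp_def, signRep_simple]

theorem inversionSign_wordProd (ω : List B) (t : W) :
    cs.inversionSign (π ω) t = (-1) ^ (ris ω).count t := by
  simp [inversionSign, signRep_wordProd, prod_map_signFlip_apply]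

theorem signRep_apply (w t : W) (ε : ℤˣ) :
    cs.signRep w (t, ε) = (w * t * w⁻¹, cs.inversionSign w t * ε) := by
  obtain ⟨ω, rfl⟩ := cs.wordProd_surjective w
  simp [signRep_wordProd, prod_map_signFlip_apply, inversionSign_wordProd]

theorem inversionSign_mul (u v t : W) :
    cs.inversionSign (u * v) t = cs.inversionSign u (v * t * v⁻¹) * cs.inversionSign v t := by
  show (cs.signRep (u * v) (t, 1)).2 = _
  rw [map_mul, Equiv.Perm.mul_apply, signRep_apply, signRep_apply, mul_one]

theorem inversionSign_one (t : W) : cs.inversionSign 1 t = 1 := by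
  simp [inversionSign]

theorem inversionSign_simple (i : B) (t : W) :
    cs.inversionSign (s i) t = if t = s i then -1 else 1 := by
  simp [inversionSign, signRep_simple, signFlip_apply]

theorem inversionSign_self {t : W} (ht : cs.IsReflection t) : cs.inversionSign t t = -1 := by
  obtain ⟨v, i, rfl⟩ := ht
  have hconj : v⁻¹ * (v * s i * v⁻¹) * v⁻¹⁻¹ = s i := by group
  have hcancel : cs.inversionSign v (s i) * cs.inversionSign v⁻¹ (v * s i * v⁻¹) = 1 := by
    have := cs.inversionSign_mul v v⁻¹ (v * s i * v⁻¹)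
    rwa [hconj, mul_inv_cancel, inversionSign_one, eq_comm] at this
  rw [inversionSign_mul, hconj, inversionSign_mul, mul_inv_cancel_right, inversionSign_simple,
    if_pos rfl, mul_right_comm, hcancel, one_mul]

end SignRepresentation

theorem mem_rightInvSeq_of_length_mul_lt {w t : W} {ω : List B} (hω : π ω = w)
    (ht : cs.IsReflection t) (hlt : ℓ (w * t) < ℓ w) : t ∈ ris ω := by
  classical
  by_contra hmem
  have hw : cs.inversionSign w t = 1 := by
    rw [← hω, inversionSign_wordProd, List.count_eq_zero_of_not_mem hmem, pow_zero]
  have hwt : cs.inversionSign (w * t) t = -1 := by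
    rw [inversionSign_mul, mul_inv_cancel_right, hw, inversionSign_self cs ht,
      one_mul]
  obtain ⟨ω', hred, hω'⟩ := cs.exists_isReduced (w * t)
  have hmem' : t ∈ ris ω' := by
    by_contra h
    rw [hω', inversionSign_wordProd, List.count_eq_zero_of_not_mem h, pow_zero] at hwt
    exact absurd hwt (by decide)
  have := (cs.isRightInversion_of_mem_rightInvSeq hred hmem').2
  rw [← hω', mul_assoc, ht.mul_self, mul_one] at this
  omega

theorem length_mul_mul_simple_add_two_le {w t : W} {j : B} (hj : ℓ (w * s j) < ℓ w)
    (ht : cs.IsReflection t) (hwt : ℓ (w * t) < ℓ w) (hne : t ≠ s j) :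
    ℓ (w * t * s j) + 2 ≤ ℓ w := by
  obtain ⟨μ, hred, hμ⟩ := cs.exists_isReduced (w * s j)
  have hω : π (μ.concat j) = w := by
    rw [List.concat_eq_append, wordProd_append, wordProd_singleton, ← hμ, mul_assoc,
      simple_mul_simple_self, mul_one]
  have hmem := cs.mem_rightInvSeq_of_length_mul_lt hω ht hwt
  rw [rightInvSeq_concat, List.concat_eq_append, List.mem_append, List.mem_singleton,
    or_iff_left hne, List.mem_map] at hmem
  obtain ⟨t', ht', rfl⟩ := hmem
  have hinv := (cs.isRightInversion_of_mem_rightInvSeq hred ht').2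
  rw [← hμ] at hinv
  have hwt' : w * MulAut.conj (s j) t' * s j = w * s j * t' := by
    simp [MulAut.conj_apply, mul_assoc]
  rw [hwt']
  rcases cs.length_mul_simple w j with h | h <;> omega

theorem simple_mul_eq_mul_simple_of_length_lt {w : W} {i j : B}
    (hi : ℓ (s i * w) < ℓ w) (hj : ℓ (w * s j) < ℓ w) (h : ℓ (s i * w * s j) = ℓ w) :
    s i * w = w * s j := by
  have ht : cs.IsReflection (w⁻¹ * s i * w) := by
    simpa using (cs.isReflection_simple i).conj w⁻¹
  have hwt : w * (w⁻¹ * s i * w) = s i * w := by group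
  by_contra hne
  have hne' : w⁻¹ * s i * w ≠ s j := fun h' => hne (by rw [← h']; group)
  have := cs.length_mul_mul_simple_add_two_le hj ht (by rwa [hwt]) hne'
  rw [hwt, h] at this
  omega

theorem simple_mul_eq_mul_simple {w : W} {i j : B} (h : ℓ (s i * w * s j) = ℓ w)
    (hij : ℓ (s i * w) < ℓ w ↔ ℓ (w * s j) < ℓ w) : s i * w = w * s j := by
  by_cases hi : ℓ (s i * w) < ℓ w
  · exact cs.simple_mul_eq_mul_simple_of_length_lt hi (hij.mp hi) h
  · have hi' := cs.length_simple_mul w i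
    have hj' := cs.length_mul_simple w j
    have hj : ¬ ℓ (w * s j) < ℓ w := mt hij.mpr hi
    have e1 : s i * (s i * w) = w := cs.simple_mul_simple_cancel_left i
    have e2 : s i * (s i * w) * s j = w * s j := by rw [e1]
    have key := cs.simple_mul_eq_mul_simple_of_length_lt
      (w := s i * w) (by rw [e1]; omega) (by rw [h]; omega) (by rw [e2]; omega)
    rw [e1] at key
    calc s i * w = s i * w * s j * s j := by simp [mul_assoc]
      _ = w * s j := by rw [← key]

theorem induction_on_rightDescent {p : W → Prop} (w : W) (one : p 1)
    (mul : ∀ w j, ℓ (w * s j) < ℓ w → p (w * s j) → p w) : p w := by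
  induction hn : ℓ w using Nat.strong_induction_on generalizing w with
  | _ n ih =>
    by_cases hw : w = 1
    · rwa [hw]
    obtain ⟨j, hj⟩ := cs.exists_rightDescent_of_ne_one hw
    exact mul w j hj (ih _ (hn ▸ hj) _ rfl)

theorem induction_on_leftDescent {p : W → Prop} (w : W) (one : p 1)
    (mul : ∀ w i, ℓ (s i * w) < ℓ w → p (s i * w) → p w) : p w := by
  induction hn : ℓ w using Nat.strong_induction_on generalizing w with
  | _ n ih =>
    by_cases hw : w = 1
    · rwa [hw]
    obtain ⟨i, hi⟩ := cs.exists_leftDescent_of_ne_one hw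
    exact mul w i hi (ih _ (hn ▸ hi) _ rfl)

-- At `q = 2` the recursion of `R_{·,w}` along a right descent `s_j` of `w` reads
-- `R_{·,w}(2) = rightRecOp j R_{·,ws_j}(2)`; `leftRecOp` is its mirror image.
noncomputable def rightRecOp (j : B) : Function.End (W → ℤ) :=
  fun f u => if ℓ (u * s j) < ℓ u then f (u * s j) else f u + 2 * f (u * s j)

noncomputable def leftRecOp (i : B) : Function.End (W → ℤ) :=
  fun f u => if ℓ (s i * u) < ℓ u then f (s i * u) else f u + 2 * f (s i * u)

theorem rightRecOp_apply (j : B) (f : W → ℤ) (u : W) :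
    cs.rightRecOp j f u = if ℓ (u * s j) < ℓ u then f (u * s j) else f u + 2 * f (u * s j) :=
  rfl

theorem leftRecOp_apply (i : B) (f : W → ℤ) (u : W) :
    cs.leftRecOp i f u = if ℓ (s i * u) < ℓ u then f (s i * u) else f u + 2 * f (s i * u) :=
  rfl

theorem commute_leftRecOp_rightRecOp (i j : B) :
    Commute (cs.leftRecOp i) (cs.rightRecOp j) := by
  funext f u
  show cs.leftRecOp i (cs.rightRecOp j f) u = cs.rightRecOp j (cs.leftRecOp i f) u
  simp only [leftRecOp_apply, rightRecOp_apply, ← mul_assoc]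
  by_cases heq : s i * u = u * s j
  · have hu : s i * u * s j = u := by rw [heq, mul_assoc, simple_mul_simple_self, mul_one]
    rw [hu, heq]
  · have hsq : ¬ (ℓ (s i * u * s j) = ℓ u ∧ (ℓ (s i * u) < ℓ u ↔ ℓ (u * s j) < ℓ u)) :=
      fun ⟨h1, h2⟩ => heq (cs.simple_mul_eq_mul_simple h1 h2)
    have hL := cs.length_simple_mul u i
    have hR := cs.length_mul_simple u j
    have hLR := cs.length_simple_mul (u * s j) i
    have hRL := cs.length_mul_simple (s i * u) j
    rw [← mul_assoc] at hLR
    split_ifs <;> omega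

theorem rightRecOp_eq_leftRecOp {f : W → ℤ} (hf : ∀ u ≠ 1, f u = 0) (i : B) :
    cs.rightRecOp i f = cs.leftRecOp i f := by
  funext u
  rw [rightRecOp_apply, leftRecOp_apply]
  by_cases hi : u = s i
  · rw [hi]
  have h1 : f (u * s i) = 0 := hf _ (by rwa [Ne, mul_eq_one_iff_eq_inv, inv_simple])
  have h2 : f (s i * u) = 0 := hf _ (by rwa [Ne, mul_eq_one_iff_inv_eq, inv_simple, eq_comm])
  rw [h1, h2]
  by_cases hu : u = 1
  · simp [hu]
  · simp [hf u hu]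

end CoxeterSystem

section BruhatOrder

variable {B W : Type*} [Group W] {M : CoxeterMatrix B} {cs : CoxeterSystem M W}

local prefix:100 "s" => cs.simple
local prefix:100 "ℓ" => cs.length

theorem bruhatEdge_mul_simple {u : W} {j : B} (hu : ℓ u < ℓ (u * s j)) :
    BruhatEdge cs u (u * s j) :=
  ⟨s j, cs.isReflection_simple j, rfl, hu⟩

theorem bruhatEdge_mul_simple_of_length_lt {u : W} {j : B} (hu : ℓ (u * s j) < ℓ u) :
    BruhatEdge cs (u * s j) u :=
  ⟨s j, cs.isReflection_simple j, by simp [mul_assoc], hu⟩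

theorem BruhatLE.length_le {u w : W} (h : BruhatLE cs u w) : ℓ u ≤ ℓ w := by
  induction h with
  | refl => rfl
  | tail _ hvw ih =>
    obtain ⟨-, -, -, hlt⟩ := hvw
    exact ih.trans hlt.le

theorem BruhatLE.eq_one {u : W} (h : BruhatLE cs u 1) : u = 1 := by
  simpa [CoxeterSystem.length_eq_zero_iff] using h.length_le

theorem BruhatEdge.mul_simple {v w : W} {j : B} (h : BruhatEdge cs v w)
    (hw : ℓ (w * s j) < ℓ w) (hne : v ≠ w * s j) : BruhatEdge cs (v * s j) (w * s j) := by
  obtain ⟨t, ht, rfl, hlt⟩ := h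
  have htj : t ≠ s j := by
    rintro rfl
    simp [mul_assoc] at hne
  refine ⟨s j * t * s j, by simpa using ht.conj (s j), by simp [mul_assoc], ?_⟩
  have hv : v * t * t = v := by rw [mul_assoc, ht.mul_self, mul_one]
  have := cs.length_mul_mul_simple_add_two_le hw ht (by rwa [hv]) htj
  rw [hv] at this
  rcases cs.length_mul_simple (v * t) j with h | h <;> omega

theorem BruhatLE.le_mul_simple {u w : W} {j : B} (h : BruhatLE cs u w)
    (hw : ℓ (w * s j) < ℓ w) (hu : ℓ u < ℓ (u * s j)) : BruhatLE cs u (w * s j) := by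
  induction h with
  | refl => omega
  | @tail v w huv hvw ih =>
    by_cases hv : v = w * s j
    · rwa [← hv]
    have hedge := hvw.mul_simple hw hv
    rcases cs.length_mul_simple v j with hvj | hvj
    · exact (huv.tail (bruhatEdge_mul_simple (by omega))).tail hedge
    · exact (ih (by omega)).tail hedge

theorem BruhatLE.mul_simple_le_mul_simple {u w : W} {j : B} (h : BruhatLE cs u w)
    (hw : ℓ (w * s j) < ℓ w) (hu : ℓ (u * s j) < ℓ u) : BruhatLE cs (u * s j) (w * s j) := by
  have hus : BruhatLE cs (u * s j) u := .single (bruhatEdge_mul_simple_of_length_lt hu)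
  induction h with
  | refl => exact .refl
  | @tail v w huv hvw ih =>
    by_cases hv : v = w * s j
    · exact hv ▸ hus.trans huv
    have hedge := hvw.mul_simple hw hv
    rcases cs.length_mul_simple v j with hvj | hvj
    · exact ((hus.trans huv).tail (bruhatEdge_mul_simple (by omega))).tail hedge
    · exact (ih (by omega)).tail hedge

end BruhatOrder

namespace IsRFamily

open CoxeterSystem

variable {B W : Type*} [Group W] {M : CoxeterMatrix B} {cs : CoxeterSystem M W}
  {R : W → W → ℤ[X]}

local prefix:100 "s" => cs.simple
local prefix:100 "π" => cs.wordProd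
local prefix:100 "ℓ" => cs.length

theorem eval_two_of_not_bruhatLE (hR : IsRFamily cs R) {u w : W} (h : ¬BruhatLE cs u w) :
    (R u w).eval 2 = 0 := by
  rw [hR.1 u w h, eval_zero]

theorem eval_two_self (hR : IsRFamily cs R) (w : W) : (R w w).eval 2 = 1 := by
  rw [hR.2.1 w, eval_one]

theorem eval_two_eq_rightRecOp (hR : IsRFamily cs R) {w : W} {j : B} (hw : ℓ (w * s j) < ℓ w)
    (u : W) : (R u w).eval 2 = cs.rightRecOp j (fun u => (R u (w * s j)).eval 2) u := by
  rw [rightRecOp_apply]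
  split_ifs with hu
  · rw [(hR.2.2 u w j hw).1 hu]
  · rw [(hR.2.2 u w j hw).2 (by rcases cs.length_mul_simple u j with h | h <;> omega)]
    simp only [eval_add, eval_mul, eval_sub, eval_X, eval_one]
    ring

theorem eval_two_eq_prod_rightRecOp (hR : IsRFamily cs R) {ω : List B} (hω : cs.IsReduced ω) :
    (fun u => (R u (π ω)).eval 2) =
      (ω.reverse.map cs.rightRecOp).prod (fun u => (R u 1).eval 2) := by
  induction ω using List.reverseRecOn with
  | nil => rfl
  | append_singleton ω j ih =>
    have hred : cs.IsReduced ω := by simpa using hω.take ω.length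
    have hπ : π (ω ++ [j]) * s j = π ω := by simp [wordProd_append, mul_assoc]
    have hdesc : ℓ (π (ω ++ [j]) * s j) < ℓ (π (ω ++ [j])) := by
      rw [hπ, hω.eq, hred.eq]
      simp
    funext u
    rw [hR.eval_two_eq_rightRecOp hdesc, hπ, ih hred, List.reverse_append,
      List.reverse_singleton, List.singleton_append, List.map_cons, List.prod_cons]
    rfl

theorem eval_two_eq_leftRecOp (hR : IsRFamily cs R) {w : W} {i : B} (hw : ℓ (s i * w) < ℓ w)
    (u : W) : (R u w).eval 2 = cs.leftRecOp i (fun u => (R u (s i * w)).eval 2) u := by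
  obtain ⟨μ, hμ, hμw⟩ := cs.exists_isReduced (s i * w)
  have hw' : π (i :: μ) = w := by rw [wordProd_cons, ← hμw, simple_mul_simple_cancel_left]
  have hred : cs.IsReduced (i :: μ) := by
    rw [CoxeterSystem.IsReduced, hw', List.length_cons, ← hμ.eq, ← hμw]
    rcases cs.length_simple_mul w i with h | h <;> omega
  have hcomm : Commute (cs.leftRecOp i) (μ.reverse.map cs.rightRecOp).prod :=
    Commute.list_prod_right _ _ fun _ hx => by
      obtain ⟨j, -, rfl⟩ := List.mem_map.mp hx
      exact cs.commute_leftRecOp_rightRecOp i j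
  have hF1 : ∀ u ≠ 1, (R u 1).eval 2 = 0 := fun u hu =>
    hR.eval_two_of_not_bruhatLE fun h => hu h.eq_one
  calc (R u w).eval 2
      = (μ.reverse.map cs.rightRecOp).prod (cs.rightRecOp i fun u => (R u 1).eval 2) u := by
        rw [← hw', congrFun (hR.eval_two_eq_prod_rightRecOp hred) u, List.reverse_cons,
          List.map_append, List.prod_append, List.map_singleton, List.prod_singleton]
        rfl
    _ = ((μ.reverse.map cs.rightRecOp).prod * cs.leftRecOp i) (fun u => (R u 1).eval 2) u := by
        rw [cs.rightRecOp_eq_leftRecOp hF1]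
        rfl
    _ = cs.leftRecOp i (fun u => (R u (s i * w)).eval 2) u := by
        rw [← hcomm.eq, hμw, hR.eval_two_eq_prod_rightRecOp hμ]
        rfl

theorem eval_two_nonneg (hR : IsRFamily cs R) (u w : W) : 0 ≤ (R u w).eval 2 := by
  induction w using cs.induction_on_rightDescent generalizing u with
  | one =>
    by_cases hu : u = 1
    · rw [hu, hR.eval_two_self]
      exact zero_le_one
    · exact (hR.eval_two_of_not_bruhatLE fun h => hu h.eq_one).ge
  | mul w j hj ih =>
    simp only [hR.eval_two_eq_rightRecOp hj, rightRecOp_apply]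
    split_ifs
    · exact ih _
    · linarith [ih u, ih (u * s j)]

theorem eval_two_le_eval_two_mul_simple (hR : IsRFamily cs R) {a : W} {j : B}
    (ha : ℓ (a * s j) < ℓ a) (v : W) : (R a v).eval 2 ≤ (R (a * s j) v).eval 2 := by
  induction v using cs.induction_on_leftDescent generalizing a with
  | one =>
    have ha1 : a ≠ 1 := by rintro rfl; simp at ha
    rw [hR.eval_two_of_not_bruhatLE fun h => ha1 h.eq_one]
    exact hR.eval_two_nonneg _ _
  | mul v i hi ih =>
    simp only [hR.eval_two_eq_leftRecOp hi, leftRecOp_apply, ← mul_assoc]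
    have hA := cs.length_simple_mul a i
    have hD := cs.length_mul_simple a j
    have hB := cs.length_simple_mul (a * s j) i
    have hC := cs.length_mul_simple (s i * a) j
    rw [← mul_assoc] at hB
    split_ifs with h1 h2 h2
    · exact ih (by omega)
    · rw [cs.simple_mul_eq_mul_simple (by omega) (iff_of_true h1 ha)]
      linarith [hR.eval_two_nonneg (a * s j * s j) (s i * v)]
    · omega
    · linarith [ih ha, ih (a := s i * a) (by omega)]

theorem eval_two_mono (hR : IsRFamily cs R) {u w : W} (huw : BruhatLE cs u w) (a : W) :
    (R a u).eval 2 ≤ (R a w).eval 2 := by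
  induction w using cs.induction_on_rightDescent generalizing u a with
  | one => rw [huw.eq_one]
  | mul w j hj ih =>
    rw [hR.eval_two_eq_rightRecOp hj, rightRecOp_apply]
    rcases cs.length_mul_simple u j with hu | hu
    · have hle := huw.le_mul_simple hj (by omega)
      split_ifs with ha
      · exact (ih hle a).trans (hR.eval_two_le_eval_two_mul_simple ha _)
      · linarith [ih hle a, hR.eval_two_nonneg (a * s j) (w * s j)]
    · have hle := huw.mul_simple_le_mul_simple hj (by omega)
      rw [hR.eval_two_eq_rightRecOp (show ℓ (u * s j) < ℓ u by omega), rightRecOp_apply]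
      split_ifs
      · exact ih hle _
      · linarith [ih hle a, ih hle (a * s j)]

end IsRFamily

theorem stmt4_general {B W : Type*} [Group W] {M : CoxeterMatrix B}
    (cs : CoxeterSystem M W)
    (R : W → W → Polynomial ℤ) (hR : IsRFamily cs R)
    (u v : W) (huv : BruhatLE cs u v) :
    (R 1 u).eval 2 ≤ (R 1 v).eval 2 :=
  hR.eval_two_mono huv 1

theorem stmt4 {B W : Type*} [Group W] [Finite W] {M : CoxeterMatrix B}
    (cs : CoxeterSystem M W)
    (R : W → W → Polynomial ℤ) (hR : IsRFamily cs R)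
    (u v : W) (huv : BruhatLE cs u v) :
    (R 1 u).eval 2 ≤ (R 1 v).eval 2 :=
  stmt4_general cs R hR u v huv
end

section
/- For every integer n ≥ 1, the derivative of the n-th dihedral polynomial satisfies the polynomial identity (q+2)²·d_n′(q) = 2·((q+1)^n − (−1)^n) + n·q·(q+2)·(q+1)^{n−1} in ℤ[q]. -/
open Polynomial

lemma dPoly_key : ∀ n : ℕ,
    (X + 2) * dPoly (n + 1) = X * ((X + 1) ^ (n + 1) - (-1 : Polynomial ℤ) ^ (n + 1)) := by
  intro n
  induction n using Nat.strong_induction_on with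
  | _ n ih =>
    match n with
    | 0 => simp [dPoly]; ring
    | 1 => simp [dPoly]; ring
    | (m + 2) =>
      have h1 := ih (m + 1) (by omega)
      have h2 := ih m (by omega)
      show (X + 2) * dPoly (m + 3) = _
      rw [dPoly]
      linear_combination X * h1 + (X + 1) * h2

theorem stmt17 (n : ℕ) (hn : 1 ≤ n) :
    (X + 2) ^ 2 * Polynomial.derivative (dPoly n)
      = 2 * ((X + 1) ^ n - (-1 : Polynomial ℤ) ^ n)
        + (n : Polynomial ℤ) * X * (X + 2) * (X + 1) ^ (n - 1) := by
  cases n with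
  | zero => omega
  | succ m =>
    have key := dPoly_key m
    have hd := congrArg derivative key
    simp only [derivative_mul, derivative_sub, derivative_add, derivative_pow,
      derivative_X, derivative_one, derivative_ofNat, derivative_neg,
      Nat.add_sub_cancel, mul_one, mul_zero, add_zero, zero_mul, sub_zero,
      Polynomial.derivative_one, neg_zero] at hd
    rw [map_natCast C] at hd
    simp only [Nat.succ_sub_one, Nat.cast_add, Nat.cast_one]
    push_cast at hd ⊢
    linear_combination (X + 2) * hd - key
end
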